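/- For n ∈ {2, 3}, the opposing-kings game digraph G(K(1,n)) on the 1×n strip has metric dimension 2 with respect to signed distance. -/

import Mathlib

/-- `StepsTo R m u v` : there is a directed walk of length `m` from `u` to `v`. -/
def StepsTo {V : Type*} (R : V → V → Prop) : ℕ → V → V → Prop
  | 0 => fun u v => u = v
  | (m + 1) => fun u v => ∃ w, R u w ∧ StepsTo R m w v

/-- Directed distance: length of a shortest directed path (`⊤` = ∞ if none exists). -/
noncomputable def ddist {V : Type*} (R : V → V → Prop) (u v : V) : ℕ∞ :=
  sInf ((fun m : ℕ => (m : ℕ∞)) '' {m : ℕ | StepsTo R m u v})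

/-- Signed distance `d±(u,v)`: `d(u,v)` if a `u→v` path exists and `d(u,v) ≤ d(v,u)`;
`-d(v,u)` if a `v→u` path exists and `d(v,u) < d(u,v)`; `⊤` if neither path exists. -/
noncomputable def sdist {V : Type*} (R : V → V → Prop) (u v : V) : WithTop ℤ :=
  if ddist R u v ≤ ddist R v u then (ddist R u v).map (fun m : ℕ => (m : ℤ))
  else (ddist R v u).map (fun m : ℕ => (-(m : ℤ)))

/-- `S` resolves the digraph with arc relation `R` (w.r.t. signed distance). -/
def Resolves {V : Type*} (R : V → V → Prop) (S : Set V) : Prop :=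
  ∀ u v : V, (∀ s ∈ S, sdist R s u = sdist R s v) → u = v

/-- Metric dimension of the digraph with arc relation `R` (w.r.t. signed distance). -/
noncomputable def metricDim {V : Type*} (R : V → V → Prop) : ℕ :=
  sInf {k : ℕ | ∃ S : Finset V, S.card = k ∧ Resolves R ↑S}

/-- A position of the opposing-kings game on a `1 × n` strip: both kings on the board
(white king `K` on square `i`, black king `k` on square `j`), or only one king left. -/
inductive KingPos (n : ℕ) : Type
  | both : Fin n → Fin n → KingPos n
  | onlyK : Fin n → KingPos n
  | onlyk : Fin n → KingPos n
deriving DecidableEq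

/-- A position is valid when the two kings occupy distinct squares. -/
def KingPos.valid {n : ℕ} : KingPos n → Prop
  | .both i j => i ≠ j
  | .onlyK _ => True
  | .onlyk _ => True

/-- Two squares of the strip are adjacent (a king move). -/
def adjSq {n : ℕ} (i j : Fin n) : Prop := i.val + 1 = j.val ∨ j.val + 1 = i.val

/-- A move in the opposing-kings game on a `1 × n` strip: either king steps to an
adjacent square not occupied by the other king, and when the kings are adjacent either
one may capture the other (leaving a single king on the captured square). A lone king
moves to an adjacent square. -/
def KingMove {n : ℕ} : KingPos n → KingPos n → Prop
  | .both i j, .both i2 j2 =>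
      (adjSq i i2 ∧ j = j2 ∧ i2 ≠ j) ∨ (i = i2 ∧ adjSq j j2 ∧ j2 ≠ i)
  | .both i j, .onlyK m => adjSq i j ∧ m = j
  | .both i j, .onlyk m => adjSq i j ∧ m = i
  | .onlyK i, .onlyK i2 => adjSq i i2
  | .onlyk j, .onlyk j2 => adjSq j j2
  | _, _ => False

/-- Vertices of `G(K(1,n))`: the valid positions. -/
def KingV (n : ℕ) : Type := {p : KingPos n // p.valid}

/-- The arc relation of the game digraph `G(K(1,n))`. -/
def kingR (n : ℕ) (u v : KingV n) : Prop := KingMove u.1 v.1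

-- ===== helpers =====
section Helpers
variable {V : Type*}

instance {n : ℕ} {i j : Fin n} : Decidable (adjSq i j) :=
  inferInstanceAs (Decidable (_ ∨ _))

instance {n : ℕ} : DecidablePred (@KingPos.valid n) := fun p =>
  match p with
  | .both i j => inferInstanceAs (Decidable (i ≠ j))
  | .onlyK _ => inferInstanceAs (Decidable True)
  | .onlyk _ => inferInstanceAs (Decidable True)

instance {n : ℕ} : ∀ u v : KingPos n, Decidable (KingMove u v)
  | .both _ _, .both _ _ => inferInstanceAs (Decidable (_ ∨ _))
  | .both _ _, .onlyK _ => inferInstanceAs (Decidable (_ ∧ _))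
  | .both _ _, .onlyk _ => inferInstanceAs (Decidable (_ ∧ _))
  | .onlyK _, .onlyK _ => inferInstanceAs (Decidable (adjSq _ _))
  | .onlyk _, .onlyk _ => inferInstanceAs (Decidable (adjSq _ _))
  | .onlyK _, .both _ _ => .isFalse (fun h => h)
  | .onlyK _, .onlyk _ => .isFalse (fun h => h)
  | .onlyk _, .both _ _ => .isFalse (fun h => h)
  | .onlyk _, .onlyK _ => .isFalse (fun h => h)

instance {n : ℕ} : Fintype (KingPos n) :=
  Fintype.ofSurjective (fun x : (Fin n × Fin n) ⊕ Fin n ⊕ Fin n =>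
    match x with
    | .inl (i, j) => KingPos.both i j
    | .inr (.inl i) => KingPos.onlyK i
    | .inr (.inr j) => KingPos.onlyk j) (by
    intro p
    cases p with
    | both i j => exact ⟨.inl (i, j), rfl⟩
    | onlyK i => exact ⟨.inr (.inl i), rfl⟩
    | onlyk j => exact ⟨.inr (.inr j), rfl⟩)

instance {n : ℕ} : Fintype (KingV n) :=
  inferInstanceAs (Fintype {p : KingPos n // p.valid})
instance {n : ℕ} : DecidableEq (KingV n) :=
  inferInstanceAs (DecidableEq {p : KingPos n // p.valid})
instance {n : ℕ} : DecidableRel (kingR n) := fun u v =>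
  inferInstanceAs (Decidable (KingMove u.1 v.1))

instance stepsToDec [Fintype V] [DecidableEq V] {R : V → V → Prop} [DecidableRel R] :
    ∀ m, DecidableRel (StepsTo R m)
  | 0 => fun u v => inferInstanceAs (Decidable (u = v))
  | (m+1) => fun u v =>
    have : DecidableRel (StepsTo R m) := stepsToDec m
    inferInstanceAs (Decidable (∃ w, R u w ∧ StepsTo R m w v))

lemma ddist_eq (R : V → V → Prop) (u v : V) (d : ℕ)
    (h1 : StepsTo R d u v) (h2 : ∀ m, m < d → ¬ StepsTo R m u v) :
    ddist R u v = (d : ℕ∞) := by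
  refine le_antisymm (sInf_le ⟨d, h1, rfl⟩) (le_sInf ?_)
  rintro x ⟨m, hm, rfl⟩
  by_contra hlt
  push_neg at hlt
  exact h2 m (by exact_mod_cast hlt) hm

lemma stepsTo_inv {R : V → V → Prop} {P : V → Prop}
    (hP : ∀ a b, P a → R a b → P b) (m : ℕ) :
    ∀ u v, StepsTo R m u v → P u → P v := by
  induction m with
  | zero => intro u v h hu; exact h ▸ hu
  | succ m ih => rintro u v ⟨w, hw, hs⟩ hu; exact ih w v hs (hP u w hu hw)

lemma ddist_top {R : V → V → Prop} {P : V → Prop}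
    (hP : ∀ a b, P a → R a b → P b) {u v : V} (hu : P u) (hv : ¬ P v) :
    ddist R u v = ⊤ := by
  rw [ddist, sInf_eq_top]
  rintro x ⟨m, hm, rfl⟩
  exact (hv (stepsTo_inv hP m u v hm hu)).elim

lemma sdist_le (R : V → V → Prop) {u v : V} {a b : ℕ}
    (h1 : ddist R u v = (a : ℕ∞)) (h2 : ddist R v u = (b : ℕ∞)) (hab : a ≤ b) :
    sdist R u v = ((a : ℤ) : WithTop ℤ) := by
  rw [sdist, h1, h2, if_pos (by exact_mod_cast hab)]
  rfl

lemma sdist_gt (R : V → V → Prop) {u v : V} {a b : ℕ}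
    (h1 : ddist R u v = (a : ℕ∞)) (h2 : ddist R v u = (b : ℕ∞)) (hab : b < a) :
    sdist R u v = ((-(b : ℤ)) : WithTop ℤ) := by
  rw [sdist, h1, h2, if_neg (by exact_mod_cast Nat.not_le.mpr hab)]
  rfl

lemma sdist_ltop (R : V → V → Prop) {u v : V} {b : ℕ}
    (h1 : ddist R u v = ⊤) (h2 : ddist R v u = (b : ℕ∞)) :
    sdist R u v = ((-(b : ℤ)) : WithTop ℤ) := by
  rw [sdist, h1, h2, if_neg (by simp)]
  rfl

lemma sdist_rtop (R : V → V → Prop) {u v : V} {a : ℕ}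
    (h1 : ddist R u v = (a : ℕ∞)) (h2 : ddist R v u = ⊤) :
    sdist R u v = ((a : ℤ) : WithTop ℤ) := by
  rw [sdist, h1, h2, if_pos le_top]
  rfl

lemma sdist_btop (R : V → V → Prop) {u v : V}
    (h1 : ddist R u v = ⊤) (h2 : ddist R v u = ⊤) :
    sdist R u v = ⊤ := by
  rw [sdist, h1, h2, if_pos le_rfl]
  rfl

end Helpers

instance stepsToDecSub {n : ℕ} (m : ℕ) (u v : {p : KingPos n // p.valid}) :
    Decidable (StepsTo (kingR n) m u v) := @stepsToDec (KingV n) _ _ (kingR n)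
      (fun a b => inferInstanceAs (Decidable (KingMove a.1 b.1))) m u v
instance kingVDecEqSub {n : ℕ} (u v : {p : KingPos n // p.valid}) :
    Decidable (@Eq (KingV n) u v) := instDecidableEqKingV u v

def isOnlyB {n : ℕ} : KingPos n → Bool
  | .both _ _ => false
  | _ => true
def isKB {n : ℕ} : KingPos n → Bool
  | .onlyK _ => true
  | _ => false
def iskB {n : ℕ} : KingPos n → Bool
  | .onlyk _ => true
  | _ => false
def notGtB {n : ℕ} : KingPos n → Bool
  | .both i j => decide (i.val < j.val)
  | _ => true
def notLtB {n : ℕ} : KingPos n → Bool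
  | .both i j => decide (j.val < i.val)
  | _ => true

-- ===== n = 2 =====
lemma cOnly2 : ∀ a b : KingV 2, isOnlyB a.1 = true → kingR 2 a b → isOnlyB b.1 = true := by decide
lemma cK2 : ∀ a b : KingV 2, isKB a.1 = true → kingR 2 a b → isKB b.1 = true := by decide
lemma ck2 : ∀ a b : KingV 2, iskB a.1 = true → kingR 2 a b → iskB b.1 = true := by decide
lemma cGt2 : ∀ a b : KingV 2, notGtB a.1 = true → kingR 2 a b → notGtB b.1 = true := by decide
lemma cLt2 : ∀ a b : KingV 2, notLtB a.1 = true → kingR 2 a b → notLtB b.1 = true := by decide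

lemma fct2_K0_K0 : sdist (kingR 2) (⟨KingPos.onlyK 0, trivial⟩ : KingV 2) (⟨KingPos.onlyK 0, trivial⟩ : KingV 2) = ((0 : ℤ) : WithTop ℤ) :=
  sdist_le (kingR 2) (ddist_eq _ _ _ 0 (by decide) (by decide)) (ddist_eq _ _ _ 0 (by decide) (by decide)) (by decide)
lemma fct2_K0_K1 : sdist (kingR 2) (⟨KingPos.onlyK 0, trivial⟩ : KingV 2) (⟨KingPos.onlyK 1, trivial⟩ : KingV 2) = ((1 : ℤ) : WithTop ℤ) :=
  sdist_le (kingR 2) (ddist_eq _ _ _ 1 (by decide) (by decide)) (ddist_eq _ _ _ 1 (by decide) (by decide)) (by decide)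
lemma fct2_K0_b01 : sdist (kingR 2) (⟨KingPos.onlyK 0, trivial⟩ : KingV 2) (⟨KingPos.both 0 1, by decide⟩ : KingV 2) = ((-2 : ℤ) : WithTop ℤ) :=
  sdist_ltop (kingR 2) (ddist_top cOnly2 (by decide) (by decide)) (ddist_eq _ _ _ 2 (by decide) (by decide))
lemma fct2_K0_b10 : sdist (kingR 2) (⟨KingPos.onlyK 0, trivial⟩ : KingV 2) (⟨KingPos.both 1 0, by decide⟩ : KingV 2) = ((-1 : ℤ) : WithTop ℤ) :=
  sdist_ltop (kingR 2) (ddist_top cOnly2 (by decide) (by decide)) (ddist_eq _ _ _ 1 (by decide) (by decide))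
lemma fct2_K0_k0 : sdist (kingR 2) (⟨KingPos.onlyK 0, trivial⟩ : KingV 2) (⟨KingPos.onlyk 0, trivial⟩ : KingV 2) = (⊤ : WithTop ℤ) :=
  sdist_btop (kingR 2) (ddist_top cK2 (by decide) (by decide)) (ddist_top ck2 (by decide) (by decide))
lemma fct2_K0_k1 : sdist (kingR 2) (⟨KingPos.onlyK 0, trivial⟩ : KingV 2) (⟨KingPos.onlyk 1, trivial⟩ : KingV 2) = (⊤ : WithTop ℤ) :=
  sdist_btop (kingR 2) (ddist_top cK2 (by decide) (by decide)) (ddist_top ck2 (by decide) (by decide))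
lemma fct2_K1_k0 : sdist (kingR 2) (⟨KingPos.onlyK 1, trivial⟩ : KingV 2) (⟨KingPos.onlyk 0, trivial⟩ : KingV 2) = (⊤ : WithTop ℤ) :=
  sdist_btop (kingR 2) (ddist_top cK2 (by decide) (by decide)) (ddist_top ck2 (by decide) (by decide))
lemma fct2_K1_k1 : sdist (kingR 2) (⟨KingPos.onlyK 1, trivial⟩ : KingV 2) (⟨KingPos.onlyk 1, trivial⟩ : KingV 2) = (⊤ : WithTop ℤ) :=
  sdist_btop (kingR 2) (ddist_top cK2 (by decide) (by decide)) (ddist_top ck2 (by decide) (by decide))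
lemma fct2_b01_K0 : sdist (kingR 2) (⟨KingPos.both 0 1, by decide⟩ : KingV 2) (⟨KingPos.onlyK 0, trivial⟩ : KingV 2) = ((2 : ℤ) : WithTop ℤ) :=
  sdist_rtop (kingR 2) (ddist_eq _ _ _ 2 (by decide) (by decide)) (ddist_top cOnly2 (by decide) (by decide))
lemma fct2_b01_K1 : sdist (kingR 2) (⟨KingPos.both 0 1, by decide⟩ : KingV 2) (⟨KingPos.onlyK 1, trivial⟩ : KingV 2) = ((1 : ℤ) : WithTop ℤ) :=
  sdist_rtop (kingR 2) (ddist_eq _ _ _ 1 (by decide) (by decide)) (ddist_top cOnly2 (by decide) (by decide))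
lemma fct2_b01_b01 : sdist (kingR 2) (⟨KingPos.both 0 1, by decide⟩ : KingV 2) (⟨KingPos.both 0 1, by decide⟩ : KingV 2) = ((0 : ℤ) : WithTop ℤ) :=
  sdist_le (kingR 2) (ddist_eq _ _ _ 0 (by decide) (by decide)) (ddist_eq _ _ _ 0 (by decide) (by decide)) (by decide)
lemma fct2_b01_b10 : sdist (kingR 2) (⟨KingPos.both 0 1, by decide⟩ : KingV 2) (⟨KingPos.both 1 0, by decide⟩ : KingV 2) = (⊤ : WithTop ℤ) :=
  sdist_btop (kingR 2) (ddist_top cGt2 (by decide) (by decide)) (ddist_top cLt2 (by decide) (by decide))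
lemma fct2_b01_k0 : sdist (kingR 2) (⟨KingPos.both 0 1, by decide⟩ : KingV 2) (⟨KingPos.onlyk 0, trivial⟩ : KingV 2) = ((1 : ℤ) : WithTop ℤ) :=
  sdist_rtop (kingR 2) (ddist_eq _ _ _ 1 (by decide) (by decide)) (ddist_top cOnly2 (by decide) (by decide))
lemma fct2_b01_k1 : sdist (kingR 2) (⟨KingPos.both 0 1, by decide⟩ : KingV 2) (⟨KingPos.onlyk 1, trivial⟩ : KingV 2) = ((2 : ℤ) : WithTop ℤ) :=
  sdist_rtop (kingR 2) (ddist_eq _ _ _ 2 (by decide) (by decide)) (ddist_top cOnly2 (by decide) (by decide))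
lemma fct2_b10_K0 : sdist (kingR 2) (⟨KingPos.both 1 0, by decide⟩ : KingV 2) (⟨KingPos.onlyK 0, trivial⟩ : KingV 2) = ((1 : ℤ) : WithTop ℤ) :=
  sdist_rtop (kingR 2) (ddist_eq _ _ _ 1 (by decide) (by decide)) (ddist_top cOnly2 (by decide) (by decide))
lemma fct2_b10_k1 : sdist (kingR 2) (⟨KingPos.both 1 0, by decide⟩ : KingV 2) (⟨KingPos.onlyk 1, trivial⟩ : KingV 2) = ((1 : ℤ) : WithTop ℤ) :=
  sdist_rtop (kingR 2) (ddist_eq _ _ _ 1 (by decide) (by decide)) (ddist_top cOnly2 (by decide) (by decide))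
lemma fct2_k0_K0 : sdist (kingR 2) (⟨KingPos.onlyk 0, trivial⟩ : KingV 2) (⟨KingPos.onlyK 0, trivial⟩ : KingV 2) = (⊤ : WithTop ℤ) :=
  sdist_btop (kingR 2) (ddist_top ck2 (by decide) (by decide)) (ddist_top cK2 (by decide) (by decide))
lemma fct2_k0_K1 : sdist (kingR 2) (⟨KingPos.onlyk 0, trivial⟩ : KingV 2) (⟨KingPos.onlyK 1, trivial⟩ : KingV 2) = (⊤ : WithTop ℤ) :=
  sdist_btop (kingR 2) (ddist_top ck2 (by decide) (by decide)) (ddist_top cK2 (by decide) (by decide))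
lemma fct2_k1_K0 : sdist (kingR 2) (⟨KingPos.onlyk 1, trivial⟩ : KingV 2) (⟨KingPos.onlyK 0, trivial⟩ : KingV 2) = (⊤ : WithTop ℤ) :=
  sdist_btop (kingR 2) (ddist_top ck2 (by decide) (by decide)) (ddist_top cK2 (by decide) (by decide))
lemma fct2_k1_K1 : sdist (kingR 2) (⟨KingPos.onlyk 1, trivial⟩ : KingV 2) (⟨KingPos.onlyK 1, trivial⟩ : KingV 2) = (⊤ : WithTop ℤ) :=
  sdist_btop (kingR 2) (ddist_top ck2 (by decide) (by decide)) (ddist_top cK2 (by decide) (by decide))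

def F1v2 : KingV 2 → WithTop ℤ := fun u =>
  if u.1 = KingPos.both 0 1 then ((0 : ℤ) : WithTop ℤ) else
  if u.1 = KingPos.both 1 0 then (⊤ : WithTop ℤ) else
  if u.1 = KingPos.onlyK 0 then ((2 : ℤ) : WithTop ℤ) else
  if u.1 = KingPos.onlyK 1 then ((1 : ℤ) : WithTop ℤ) else
  if u.1 = KingPos.onlyk 0 then ((1 : ℤ) : WithTop ℤ) else
  ((2 : ℤ) : WithTop ℤ)
def F2v2 : KingV 2 → WithTop ℤ := fun u =>
  if u.1 = KingPos.both 0 1 then ((-2 : ℤ) : WithTop ℤ) else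
  if u.1 = KingPos.both 1 0 then ((-1 : ℤ) : WithTop ℤ) else
  if u.1 = KingPos.onlyK 0 then ((0 : ℤ) : WithTop ℤ) else
  if u.1 = KingPos.onlyK 1 then ((1 : ℤ) : WithTop ℤ) else
  if u.1 = KingPos.onlyk 0 then (⊤ : WithTop ℤ) else
  (⊤ : WithTop ℤ)

lemma table2 : ∀ u : KingV 2, sdist (kingR 2) (⟨KingPos.both 0 1, by decide⟩ : KingV 2) u = F1v2 u ∧ sdist (kingR 2) (⟨KingPos.onlyK 0, trivial⟩ : KingV 2) u = F2v2 u := by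
  intro u
  obtain ⟨p, hp⟩ := u
  match p, hp with
  | .both ⟨0, _⟩ ⟨0, _⟩, hp => exact absurd rfl hp
  | .both ⟨0, _⟩ ⟨1, _⟩, _ => exact ⟨fct2_b01_b01, fct2_K0_b01⟩
  | .both ⟨1, _⟩ ⟨0, _⟩, _ => exact ⟨fct2_b01_b10, fct2_K0_b10⟩
  | .both ⟨1, _⟩ ⟨1, _⟩, hp => exact absurd rfl hp
  | .onlyK ⟨0, _⟩, _ => exact ⟨fct2_b01_K0, fct2_K0_K0⟩
  | .onlyK ⟨1, _⟩, _ => exact ⟨fct2_b01_K1, fct2_K0_K1⟩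
  | .onlyk ⟨0, _⟩, _ => exact ⟨fct2_b01_k0, fct2_K0_k0⟩
  | .onlyk ⟨1, _⟩, _ => exact ⟨fct2_b01_k1, fct2_K0_k1⟩
  | .both ⟨_+2, h⟩ _, _ => omega
  | .both _ ⟨_+2, h⟩, _ => omega
  | .onlyK ⟨_+2, h⟩, _ => omega
  | .onlyk ⟨_+2, h⟩, _ => omega

lemma inj2 : ∀ u v : KingV 2, (F1v2 u, F2v2 u) = (F1v2 v, F2v2 v) → u = v := by decide

lemma res2 : Resolves (kingR 2) ↑({(⟨KingPos.both 0 1, by decide⟩ : KingV 2), (⟨KingPos.onlyK 0, trivial⟩ : KingV 2)} : Finset (KingV 2)) := by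
  intro u v h
  have e1 := h (⟨KingPos.both 0 1, by decide⟩ : KingV 2) (Finset.mem_insert_self _ _)
  have e2 := h (⟨KingPos.onlyK 0, trivial⟩ : KingV 2) (Finset.mem_insert_of_mem (Finset.mem_singleton_self _))
  have tu := table2 u
  have tv := table2 v
  refine inj2 u v ?_
  rw [← tu.1, ← tu.2, ← tv.1, ← tv.2, e1, e2]

lemma key2 : ∀ s : KingV 2, ∃ u v : KingV 2, u ≠ v ∧ sdist (kingR 2) s u = sdist (kingR 2) s v := by
  intro s
  obtain ⟨p, hp⟩ := s
  match p, hp with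
  | .both ⟨0, _⟩ ⟨0, _⟩, hp => exact absurd rfl hp
  | .both ⟨0, _⟩ ⟨1, _⟩, _ => exact ⟨(⟨KingPos.onlyK 0, trivial⟩ : KingV 2), (⟨KingPos.onlyk 1, trivial⟩ : KingV 2), by decide, fct2_b01_K0.trans fct2_b01_k1.symm⟩
  | .both ⟨1, _⟩ ⟨0, _⟩, _ => exact ⟨(⟨KingPos.onlyK 0, trivial⟩ : KingV 2), (⟨KingPos.onlyk 1, trivial⟩ : KingV 2), by decide, fct2_b10_K0.trans fct2_b10_k1.symm⟩
  | .both ⟨1, _⟩ ⟨1, _⟩, hp => exact absurd rfl hp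
  | .onlyK ⟨0, _⟩, _ => exact ⟨(⟨KingPos.onlyk 0, trivial⟩ : KingV 2), (⟨KingPos.onlyk 1, trivial⟩ : KingV 2), by decide, fct2_K0_k0.trans fct2_K0_k1.symm⟩
  | .onlyK ⟨1, _⟩, _ => exact ⟨(⟨KingPos.onlyk 0, trivial⟩ : KingV 2), (⟨KingPos.onlyk 1, trivial⟩ : KingV 2), by decide, fct2_K1_k0.trans fct2_K1_k1.symm⟩
  | .onlyk ⟨0, _⟩, _ => exact ⟨(⟨KingPos.onlyK 0, trivial⟩ : KingV 2), (⟨KingPos.onlyK 1, trivial⟩ : KingV 2), by decide, fct2_k0_K0.trans fct2_k0_K1.symm⟩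
  | .onlyk ⟨1, _⟩, _ => exact ⟨(⟨KingPos.onlyK 0, trivial⟩ : KingV 2), (⟨KingPos.onlyK 1, trivial⟩ : KingV 2), by decide, fct2_k1_K0.trans fct2_k1_K1.symm⟩
  | .both ⟨_+2, h⟩ _, _ => omega
  | .both _ ⟨_+2, h⟩, _ => omega
  | .onlyK ⟨_+2, h⟩, _ => omega
  | .onlyk ⟨_+2, h⟩, _ => omega

lemma low2 (S : Finset (KingV 2)) (hS : Resolves (kingR 2) ↑S) : 2 ≤ S.card := by
  by_contra hlt
  push_neg at hlt
  have h01 : S.card = 0 ∨ S.card = 1 := by omega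
  rcases h01 with h0 | h1
  · rw [Finset.card_eq_zero] at h0
    subst h0
    have := hS (⟨KingPos.both 0 1, by decide⟩ : KingV 2) (⟨KingPos.onlyK 0, trivial⟩ : KingV 2) (fun s hs => absurd hs (by simp))
    exact absurd this (by decide)
  · obtain ⟨s, rfl⟩ := Finset.card_eq_one.mp h1
    obtain ⟨u, v, huv, he⟩ := key2 s
    refine huv (hS u v ?_)
    intro t ht
    have hts : t = s := by simpa using ht
    rw [hts]
    exact he

lemma dim2 : metricDim (kingR 2) = 2 := by
  have hm : 2 ∈ {k : ℕ | ∃ S : Finset (KingV 2), S.card = k ∧ Resolves (kingR 2) ↑S} :=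
    ⟨{(⟨KingPos.both 0 1, by decide⟩ : KingV 2), (⟨KingPos.onlyK 0, trivial⟩ : KingV 2)}, by decide, res2⟩
  refine le_antisymm (Nat.sInf_le hm) (le_csInf ⟨2, hm⟩ ?_)
  rintro k ⟨S, rfl, hS⟩
  exact low2 S hS

-- ===== n = 3 =====
lemma cOnly3 : ∀ a b : KingV 3, isOnlyB a.1 = true → kingR 3 a b → isOnlyB b.1 = true := by decide
lemma cK3 : ∀ a b : KingV 3, isKB a.1 = true → kingR 3 a b → isKB b.1 = true := by decide
lemma ck3 : ∀ a b : KingV 3, iskB a.1 = true → kingR 3 a b → iskB b.1 = true := by decide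
lemma cGt3 : ∀ a b : KingV 3, notGtB a.1 = true → kingR 3 a b → notGtB b.1 = true := by decide
lemma cLt3 : ∀ a b : KingV 3, notLtB a.1 = true → kingR 3 a b → notLtB b.1 = true := by decide

lemma fct3_K0_K0 : sdist (kingR 3) (⟨KingPos.onlyK 0, trivial⟩ : KingV 3) (⟨KingPos.onlyK 0, trivial⟩ : KingV 3) = ((0 : ℤ) : WithTop ℤ) :=
  sdist_le (kingR 3) (ddist_eq _ _ _ 0 (by decide) (by decide)) (ddist_eq _ _ _ 0 (by decide) (by decide)) (by decide)
lemma fct3_K0_K1 : sdist (kingR 3) (⟨KingPos.onlyK 0, trivial⟩ : KingV 3) (⟨KingPos.onlyK 1, trivial⟩ : KingV 3) = ((1 : ℤ) : WithTop ℤ) :=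
  sdist_le (kingR 3) (ddist_eq _ _ _ 1 (by decide) (by decide)) (ddist_eq _ _ _ 1 (by decide) (by decide)) (by decide)
lemma fct3_K0_K2 : sdist (kingR 3) (⟨KingPos.onlyK 0, trivial⟩ : KingV 3) (⟨KingPos.onlyK 2, trivial⟩ : KingV 3) = ((2 : ℤ) : WithTop ℤ) :=
  sdist_le (kingR 3) (ddist_eq _ _ _ 2 (by decide) (by decide)) (ddist_eq _ _ _ 2 (by decide) (by decide)) (by decide)
lemma fct3_K0_b01 : sdist (kingR 3) (⟨KingPos.onlyK 0, trivial⟩ : KingV 3) (⟨KingPos.both 0 1, by decide⟩ : KingV 3) = ((-2 : ℤ) : WithTop ℤ) :=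
  sdist_ltop (kingR 3) (ddist_top cOnly3 (by decide) (by decide)) (ddist_eq _ _ _ 2 (by decide) (by decide))
lemma fct3_K0_b02 : sdist (kingR 3) (⟨KingPos.onlyK 0, trivial⟩ : KingV 3) (⟨KingPos.both 0 2, by decide⟩ : KingV 3) = ((-3 : ℤ) : WithTop ℤ) :=
  sdist_ltop (kingR 3) (ddist_top cOnly3 (by decide) (by decide)) (ddist_eq _ _ _ 3 (by decide) (by decide))
lemma fct3_K0_b10 : sdist (kingR 3) (⟨KingPos.onlyK 0, trivial⟩ : KingV 3) (⟨KingPos.both 1 0, by decide⟩ : KingV 3) = ((-1 : ℤ) : WithTop ℤ) :=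
  sdist_ltop (kingR 3) (ddist_top cOnly3 (by decide) (by decide)) (ddist_eq _ _ _ 1 (by decide) (by decide))
lemma fct3_K0_b12 : sdist (kingR 3) (⟨KingPos.onlyK 0, trivial⟩ : KingV 3) (⟨KingPos.both 1 2, by decide⟩ : KingV 3) = ((-3 : ℤ) : WithTop ℤ) :=
  sdist_ltop (kingR 3) (ddist_top cOnly3 (by decide) (by decide)) (ddist_eq _ _ _ 3 (by decide) (by decide))
lemma fct3_K0_b20 : sdist (kingR 3) (⟨KingPos.onlyK 0, trivial⟩ : KingV 3) (⟨KingPos.both 2 0, by decide⟩ : KingV 3) = ((-2 : ℤ) : WithTop ℤ) :=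
  sdist_ltop (kingR 3) (ddist_top cOnly3 (by decide) (by decide)) (ddist_eq _ _ _ 2 (by decide) (by decide))
lemma fct3_K0_b21 : sdist (kingR 3) (⟨KingPos.onlyK 0, trivial⟩ : KingV 3) (⟨KingPos.both 2 1, by decide⟩ : KingV 3) = ((-2 : ℤ) : WithTop ℤ) :=
  sdist_ltop (kingR 3) (ddist_top cOnly3 (by decide) (by decide)) (ddist_eq _ _ _ 2 (by decide) (by decide))
lemma fct3_K0_k0 : sdist (kingR 3) (⟨KingPos.onlyK 0, trivial⟩ : KingV 3) (⟨KingPos.onlyk 0, trivial⟩ : KingV 3) = (⊤ : WithTop ℤ) :=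
  sdist_btop (kingR 3) (ddist_top cK3 (by decide) (by decide)) (ddist_top ck3 (by decide) (by decide))
lemma fct3_K0_k1 : sdist (kingR 3) (⟨KingPos.onlyK 0, trivial⟩ : KingV 3) (⟨KingPos.onlyk 1, trivial⟩ : KingV 3) = (⊤ : WithTop ℤ) :=
  sdist_btop (kingR 3) (ddist_top cK3 (by decide) (by decide)) (ddist_top ck3 (by decide) (by decide))
lemma fct3_K0_k2 : sdist (kingR 3) (⟨KingPos.onlyK 0, trivial⟩ : KingV 3) (⟨KingPos.onlyk 2, trivial⟩ : KingV 3) = (⊤ : WithTop ℤ) :=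
  sdist_btop (kingR 3) (ddist_top cK3 (by decide) (by decide)) (ddist_top ck3 (by decide) (by decide))
lemma fct3_K1_b01 : sdist (kingR 3) (⟨KingPos.onlyK 1, trivial⟩ : KingV 3) (⟨KingPos.both 0 1, by decide⟩ : KingV 3) = ((-1 : ℤ) : WithTop ℤ) :=
  sdist_ltop (kingR 3) (ddist_top cOnly3 (by decide) (by decide)) (ddist_eq _ _ _ 1 (by decide) (by decide))
lemma fct3_K1_b21 : sdist (kingR 3) (⟨KingPos.onlyK 1, trivial⟩ : KingV 3) (⟨KingPos.both 2 1, by decide⟩ : KingV 3) = ((-1 : ℤ) : WithTop ℤ) :=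
  sdist_ltop (kingR 3) (ddist_top cOnly3 (by decide) (by decide)) (ddist_eq _ _ _ 1 (by decide) (by decide))
lemma fct3_K2_b01 : sdist (kingR 3) (⟨KingPos.onlyK 2, trivial⟩ : KingV 3) (⟨KingPos.both 0 1, by decide⟩ : KingV 3) = ((-2 : ℤ) : WithTop ℤ) :=
  sdist_ltop (kingR 3) (ddist_top cOnly3 (by decide) (by decide)) (ddist_eq _ _ _ 2 (by decide) (by decide))
lemma fct3_K2_b02 : sdist (kingR 3) (⟨KingPos.onlyK 2, trivial⟩ : KingV 3) (⟨KingPos.both 0 2, by decide⟩ : KingV 3) = ((-2 : ℤ) : WithTop ℤ) :=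
  sdist_ltop (kingR 3) (ddist_top cOnly3 (by decide) (by decide)) (ddist_eq _ _ _ 2 (by decide) (by decide))
lemma fct3_b01_K1 : sdist (kingR 3) (⟨KingPos.both 0 1, by decide⟩ : KingV 3) (⟨KingPos.onlyK 1, trivial⟩ : KingV 3) = ((1 : ℤ) : WithTop ℤ) :=
  sdist_rtop (kingR 3) (ddist_eq _ _ _ 1 (by decide) (by decide)) (ddist_top cOnly3 (by decide) (by decide))
lemma fct3_b01_b02 : sdist (kingR 3) (⟨KingPos.both 0 1, by decide⟩ : KingV 3) (⟨KingPos.both 0 2, by decide⟩ : KingV 3) = ((1 : ℤ) : WithTop ℤ) :=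
  sdist_le (kingR 3) (ddist_eq _ _ _ 1 (by decide) (by decide)) (ddist_eq _ _ _ 1 (by decide) (by decide)) (by decide)
lemma fct3_b02_b01 : sdist (kingR 3) (⟨KingPos.both 0 2, by decide⟩ : KingV 3) (⟨KingPos.both 0 1, by decide⟩ : KingV 3) = ((1 : ℤ) : WithTop ℤ) :=
  sdist_le (kingR 3) (ddist_eq _ _ _ 1 (by decide) (by decide)) (ddist_eq _ _ _ 1 (by decide) (by decide)) (by decide)
lemma fct3_b02_b12 : sdist (kingR 3) (⟨KingPos.both 0 2, by decide⟩ : KingV 3) (⟨KingPos.both 1 2, by decide⟩ : KingV 3) = ((1 : ℤ) : WithTop ℤ) :=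
  sdist_le (kingR 3) (ddist_eq _ _ _ 1 (by decide) (by decide)) (ddist_eq _ _ _ 1 (by decide) (by decide)) (by decide)
lemma fct3_b10_b01 : sdist (kingR 3) (⟨KingPos.both 1 0, by decide⟩ : KingV 3) (⟨KingPos.both 0 1, by decide⟩ : KingV 3) = (⊤ : WithTop ℤ) :=
  sdist_btop (kingR 3) (ddist_top cLt3 (by decide) (by decide)) (ddist_top cGt3 (by decide) (by decide))
lemma fct3_b10_b02 : sdist (kingR 3) (⟨KingPos.both 1 0, by decide⟩ : KingV 3) (⟨KingPos.both 0 2, by decide⟩ : KingV 3) = (⊤ : WithTop ℤ) :=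
  sdist_btop (kingR 3) (ddist_top cLt3 (by decide) (by decide)) (ddist_top cGt3 (by decide) (by decide))
lemma fct3_b12_K1 : sdist (kingR 3) (⟨KingPos.both 1 2, by decide⟩ : KingV 3) (⟨KingPos.onlyK 1, trivial⟩ : KingV 3) = ((2 : ℤ) : WithTop ℤ) :=
  sdist_rtop (kingR 3) (ddist_eq _ _ _ 2 (by decide) (by decide)) (ddist_top cOnly3 (by decide) (by decide))
lemma fct3_b12_b01 : sdist (kingR 3) (⟨KingPos.both 1 2, by decide⟩ : KingV 3) (⟨KingPos.both 0 1, by decide⟩ : KingV 3) = ((2 : ℤ) : WithTop ℤ) :=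
  sdist_le (kingR 3) (ddist_eq _ _ _ 2 (by decide) (by decide)) (ddist_eq _ _ _ 2 (by decide) (by decide)) (by decide)
lemma fct3_b20_b01 : sdist (kingR 3) (⟨KingPos.both 2 0, by decide⟩ : KingV 3) (⟨KingPos.both 0 1, by decide⟩ : KingV 3) = (⊤ : WithTop ℤ) :=
  sdist_btop (kingR 3) (ddist_top cLt3 (by decide) (by decide)) (ddist_top cGt3 (by decide) (by decide))
lemma fct3_b20_b02 : sdist (kingR 3) (⟨KingPos.both 2 0, by decide⟩ : KingV 3) (⟨KingPos.both 0 2, by decide⟩ : KingV 3) = (⊤ : WithTop ℤ) :=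
  sdist_btop (kingR 3) (ddist_top cLt3 (by decide) (by decide)) (ddist_top cGt3 (by decide) (by decide))
lemma fct3_b21_b01 : sdist (kingR 3) (⟨KingPos.both 2 1, by decide⟩ : KingV 3) (⟨KingPos.both 0 1, by decide⟩ : KingV 3) = (⊤ : WithTop ℤ) :=
  sdist_btop (kingR 3) (ddist_top cLt3 (by decide) (by decide)) (ddist_top cGt3 (by decide) (by decide))
lemma fct3_b21_b02 : sdist (kingR 3) (⟨KingPos.both 2 1, by decide⟩ : KingV 3) (⟨KingPos.both 0 2, by decide⟩ : KingV 3) = (⊤ : WithTop ℤ) :=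
  sdist_btop (kingR 3) (ddist_top cLt3 (by decide) (by decide)) (ddist_top cGt3 (by decide) (by decide))
lemma fct3_k0_b02 : sdist (kingR 3) (⟨KingPos.onlyk 0, trivial⟩ : KingV 3) (⟨KingPos.both 0 2, by decide⟩ : KingV 3) = ((-2 : ℤ) : WithTop ℤ) :=
  sdist_ltop (kingR 3) (ddist_top cOnly3 (by decide) (by decide)) (ddist_eq _ _ _ 2 (by decide) (by decide))
lemma fct3_k0_b10 : sdist (kingR 3) (⟨KingPos.onlyk 0, trivial⟩ : KingV 3) (⟨KingPos.both 1 0, by decide⟩ : KingV 3) = ((-2 : ℤ) : WithTop ℤ) :=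
  sdist_ltop (kingR 3) (ddist_top cOnly3 (by decide) (by decide)) (ddist_eq _ _ _ 2 (by decide) (by decide))
lemma fct3_k1_b01 : sdist (kingR 3) (⟨KingPos.onlyk 1, trivial⟩ : KingV 3) (⟨KingPos.both 0 1, by decide⟩ : KingV 3) = ((-2 : ℤ) : WithTop ℤ) :=
  sdist_ltop (kingR 3) (ddist_top cOnly3 (by decide) (by decide)) (ddist_eq _ _ _ 2 (by decide) (by decide))
lemma fct3_k1_b02 : sdist (kingR 3) (⟨KingPos.onlyk 1, trivial⟩ : KingV 3) (⟨KingPos.both 0 2, by decide⟩ : KingV 3) = ((-2 : ℤ) : WithTop ℤ) :=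
  sdist_ltop (kingR 3) (ddist_top cOnly3 (by decide) (by decide)) (ddist_eq _ _ _ 2 (by decide) (by decide))
lemma fct3_k2_K0 : sdist (kingR 3) (⟨KingPos.onlyk 2, trivial⟩ : KingV 3) (⟨KingPos.onlyK 0, trivial⟩ : KingV 3) = (⊤ : WithTop ℤ) :=
  sdist_btop (kingR 3) (ddist_top ck3 (by decide) (by decide)) (ddist_top cK3 (by decide) (by decide))
lemma fct3_k2_K1 : sdist (kingR 3) (⟨KingPos.onlyk 2, trivial⟩ : KingV 3) (⟨KingPos.onlyK 1, trivial⟩ : KingV 3) = (⊤ : WithTop ℤ) :=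
  sdist_btop (kingR 3) (ddist_top ck3 (by decide) (by decide)) (ddist_top cK3 (by decide) (by decide))
lemma fct3_k2_K2 : sdist (kingR 3) (⟨KingPos.onlyk 2, trivial⟩ : KingV 3) (⟨KingPos.onlyK 2, trivial⟩ : KingV 3) = (⊤ : WithTop ℤ) :=
  sdist_btop (kingR 3) (ddist_top ck3 (by decide) (by decide)) (ddist_top cK3 (by decide) (by decide))
lemma fct3_k2_b01 : sdist (kingR 3) (⟨KingPos.onlyk 2, trivial⟩ : KingV 3) (⟨KingPos.both 0 1, by decide⟩ : KingV 3) = ((-3 : ℤ) : WithTop ℤ) :=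
  sdist_ltop (kingR 3) (ddist_top cOnly3 (by decide) (by decide)) (ddist_eq _ _ _ 3 (by decide) (by decide))
lemma fct3_k2_b02 : sdist (kingR 3) (⟨KingPos.onlyk 2, trivial⟩ : KingV 3) (⟨KingPos.both 0 2, by decide⟩ : KingV 3) = ((-3 : ℤ) : WithTop ℤ) :=
  sdist_ltop (kingR 3) (ddist_top cOnly3 (by decide) (by decide)) (ddist_eq _ _ _ 3 (by decide) (by decide))
lemma fct3_k2_b10 : sdist (kingR 3) (⟨KingPos.onlyk 2, trivial⟩ : KingV 3) (⟨KingPos.both 1 0, by decide⟩ : KingV 3) = ((-2 : ℤ) : WithTop ℤ) :=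
  sdist_ltop (kingR 3) (ddist_top cOnly3 (by decide) (by decide)) (ddist_eq _ _ _ 2 (by decide) (by decide))
lemma fct3_k2_b12 : sdist (kingR 3) (⟨KingPos.onlyk 2, trivial⟩ : KingV 3) (⟨KingPos.both 1 2, by decide⟩ : KingV 3) = ((-2 : ℤ) : WithTop ℤ) :=
  sdist_ltop (kingR 3) (ddist_top cOnly3 (by decide) (by decide)) (ddist_eq _ _ _ 2 (by decide) (by decide))
lemma fct3_k2_b20 : sdist (kingR 3) (⟨KingPos.onlyk 2, trivial⟩ : KingV 3) (⟨KingPos.both 2 0, by decide⟩ : KingV 3) = ((-2 : ℤ) : WithTop ℤ) :=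
  sdist_ltop (kingR 3) (ddist_top cOnly3 (by decide) (by decide)) (ddist_eq _ _ _ 2 (by decide) (by decide))
lemma fct3_k2_b21 : sdist (kingR 3) (⟨KingPos.onlyk 2, trivial⟩ : KingV 3) (⟨KingPos.both 2 1, by decide⟩ : KingV 3) = ((-1 : ℤ) : WithTop ℤ) :=
  sdist_ltop (kingR 3) (ddist_top cOnly3 (by decide) (by decide)) (ddist_eq _ _ _ 1 (by decide) (by decide))
lemma fct3_k2_k0 : sdist (kingR 3) (⟨KingPos.onlyk 2, trivial⟩ : KingV 3) (⟨KingPos.onlyk 0, trivial⟩ : KingV 3) = ((2 : ℤ) : WithTop ℤ) :=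
  sdist_le (kingR 3) (ddist_eq _ _ _ 2 (by decide) (by decide)) (ddist_eq _ _ _ 2 (by decide) (by decide)) (by decide)
lemma fct3_k2_k1 : sdist (kingR 3) (⟨KingPos.onlyk 2, trivial⟩ : KingV 3) (⟨KingPos.onlyk 1, trivial⟩ : KingV 3) = ((1 : ℤ) : WithTop ℤ) :=
  sdist_le (kingR 3) (ddist_eq _ _ _ 1 (by decide) (by decide)) (ddist_eq _ _ _ 1 (by decide) (by decide)) (by decide)
lemma fct3_k2_k2 : sdist (kingR 3) (⟨KingPos.onlyk 2, trivial⟩ : KingV 3) (⟨KingPos.onlyk 2, trivial⟩ : KingV 3) = ((0 : ℤ) : WithTop ℤ) :=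
  sdist_le (kingR 3) (ddist_eq _ _ _ 0 (by decide) (by decide)) (ddist_eq _ _ _ 0 (by decide) (by decide)) (by decide)

def F1v3 : KingV 3 → WithTop ℤ := fun u =>
  if u.1 = KingPos.both 0 1 then ((-2 : ℤ) : WithTop ℤ) else
  if u.1 = KingPos.both 0 2 then ((-3 : ℤ) : WithTop ℤ) else
  if u.1 = KingPos.both 1 0 then ((-1 : ℤ) : WithTop ℤ) else
  if u.1 = KingPos.both 1 2 then ((-3 : ℤ) : WithTop ℤ) else
  if u.1 = KingPos.both 2 0 then ((-2 : ℤ) : WithTop ℤ) else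
  if u.1 = KingPos.both 2 1 then ((-2 : ℤ) : WithTop ℤ) else
  if u.1 = KingPos.onlyK 0 then ((0 : ℤ) : WithTop ℤ) else
  if u.1 = KingPos.onlyK 1 then ((1 : ℤ) : WithTop ℤ) else
  if u.1 = KingPos.onlyK 2 then ((2 : ℤ) : WithTop ℤ) else
  if u.1 = KingPos.onlyk 0 then (⊤ : WithTop ℤ) else
  if u.1 = KingPos.onlyk 1 then (⊤ : WithTop ℤ) else
  (⊤ : WithTop ℤ)
def F2v3 : KingV 3 → WithTop ℤ := fun u =>
  if u.1 = KingPos.both 0 1 then ((-3 : ℤ) : WithTop ℤ) else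
  if u.1 = KingPos.both 0 2 then ((-3 : ℤ) : WithTop ℤ) else
  if u.1 = KingPos.both 1 0 then ((-2 : ℤ) : WithTop ℤ) else
  if u.1 = KingPos.both 1 2 then ((-2 : ℤ) : WithTop ℤ) else
  if u.1 = KingPos.both 2 0 then ((-2 : ℤ) : WithTop ℤ) else
  if u.1 = KingPos.both 2 1 then ((-1 : ℤ) : WithTop ℤ) else
  if u.1 = KingPos.onlyK 0 then (⊤ : WithTop ℤ) else
  if u.1 = KingPos.onlyK 1 then (⊤ : WithTop ℤ) else
  if u.1 = KingPos.onlyK 2 then (⊤ : WithTop ℤ) else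
  if u.1 = KingPos.onlyk 0 then ((2 : ℤ) : WithTop ℤ) else
  if u.1 = KingPos.onlyk 1 then ((1 : ℤ) : WithTop ℤ) else
  ((0 : ℤ) : WithTop ℤ)

lemma table3 : ∀ u : KingV 3, sdist (kingR 3) (⟨KingPos.onlyK 0, trivial⟩ : KingV 3) u = F1v3 u ∧ sdist (kingR 3) (⟨KingPos.onlyk 2, trivial⟩ : KingV 3) u = F2v3 u := by
  intro u
  obtain ⟨p, hp⟩ := u
  match p, hp with
  | .both ⟨0, _⟩ ⟨0, _⟩, hp => exact absurd rfl hp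
  | .both ⟨0, _⟩ ⟨1, _⟩, _ => exact ⟨fct3_K0_b01, fct3_k2_b01⟩
  | .both ⟨0, _⟩ ⟨2, _⟩, _ => exact ⟨fct3_K0_b02, fct3_k2_b02⟩
  | .both ⟨1, _⟩ ⟨0, _⟩, _ => exact ⟨fct3_K0_b10, fct3_k2_b10⟩
  | .both ⟨1, _⟩ ⟨1, _⟩, hp => exact absurd rfl hp
  | .both ⟨1, _⟩ ⟨2, _⟩, _ => exact ⟨fct3_K0_b12, fct3_k2_b12⟩
  | .both ⟨2, _⟩ ⟨0, _⟩, _ => exact ⟨fct3_K0_b20, fct3_k2_b20⟩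
  | .both ⟨2, _⟩ ⟨1, _⟩, _ => exact ⟨fct3_K0_b21, fct3_k2_b21⟩
  | .both ⟨2, _⟩ ⟨2, _⟩, hp => exact absurd rfl hp
  | .onlyK ⟨0, _⟩, _ => exact ⟨fct3_K0_K0, fct3_k2_K0⟩
  | .onlyK ⟨1, _⟩, _ => exact ⟨fct3_K0_K1, fct3_k2_K1⟩
  | .onlyK ⟨2, _⟩, _ => exact ⟨fct3_K0_K2, fct3_k2_K2⟩
  | .onlyk ⟨0, _⟩, _ => exact ⟨fct3_K0_k0, fct3_k2_k0⟩
  | .onlyk ⟨1, _⟩, _ => exact ⟨fct3_K0_k1, fct3_k2_k1⟩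
  | .onlyk ⟨2, _⟩, _ => exact ⟨fct3_K0_k2, fct3_k2_k2⟩
  | .both ⟨_+3, h⟩ _, _ => omega
  | .both _ ⟨_+3, h⟩, _ => omega
  | .onlyK ⟨_+3, h⟩, _ => omega
  | .onlyk ⟨_+3, h⟩, _ => omega

lemma inj3 : ∀ u v : KingV 3, (F1v3 u, F2v3 u) = (F1v3 v, F2v3 v) → u = v := by decide

lemma res3 : Resolves (kingR 3) ↑({(⟨KingPos.onlyK 0, trivial⟩ : KingV 3), (⟨KingPos.onlyk 2, trivial⟩ : KingV 3)} : Finset (KingV 3)) := by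
  intro u v h
  have e1 := h (⟨KingPos.onlyK 0, trivial⟩ : KingV 3) (Finset.mem_insert_self _ _)
  have e2 := h (⟨KingPos.onlyk 2, trivial⟩ : KingV 3) (Finset.mem_insert_of_mem (Finset.mem_singleton_self _))
  have tu := table3 u
  have tv := table3 v
  refine inj3 u v ?_
  rw [← tu.1, ← tu.2, ← tv.1, ← tv.2, e1, e2]

lemma key3 : ∀ s : KingV 3, ∃ u v : KingV 3, u ≠ v ∧ sdist (kingR 3) s u = sdist (kingR 3) s v := by
  intro s
  obtain ⟨p, hp⟩ := s
  match p, hp with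
  | .both ⟨0, _⟩ ⟨0, _⟩, hp => exact absurd rfl hp
  | .both ⟨0, _⟩ ⟨1, _⟩, _ => exact ⟨(⟨KingPos.both 0 2, by decide⟩ : KingV 3), (⟨KingPos.onlyK 1, trivial⟩ : KingV 3), by decide, fct3_b01_b02.trans fct3_b01_K1.symm⟩
  | .both ⟨0, _⟩ ⟨2, _⟩, _ => exact ⟨(⟨KingPos.both 0 1, by decide⟩ : KingV 3), (⟨KingPos.both 1 2, by decide⟩ : KingV 3), by decide, fct3_b02_b01.trans fct3_b02_b12.symm⟩
  | .both ⟨1, _⟩ ⟨0, _⟩, _ => exact ⟨(⟨KingPos.both 0 1, by decide⟩ : KingV 3), (⟨KingPos.both 0 2, by decide⟩ : KingV 3), by decide, fct3_b10_b01.trans fct3_b10_b02.symm⟩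
  | .both ⟨1, _⟩ ⟨1, _⟩, hp => exact absurd rfl hp
  | .both ⟨1, _⟩ ⟨2, _⟩, _ => exact ⟨(⟨KingPos.both 0 1, by decide⟩ : KingV 3), (⟨KingPos.onlyK 1, trivial⟩ : KingV 3), by decide, fct3_b12_b01.trans fct3_b12_K1.symm⟩
  | .both ⟨2, _⟩ ⟨0, _⟩, _ => exact ⟨(⟨KingPos.both 0 1, by decide⟩ : KingV 3), (⟨KingPos.both 0 2, by decide⟩ : KingV 3), by decide, fct3_b20_b01.trans fct3_b20_b02.symm⟩
  | .both ⟨2, _⟩ ⟨1, _⟩, _ => exact ⟨(⟨KingPos.both 0 1, by decide⟩ : KingV 3), (⟨KingPos.both 0 2, by decide⟩ : KingV 3), by decide, fct3_b21_b01.trans fct3_b21_b02.symm⟩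
  | .both ⟨2, _⟩ ⟨2, _⟩, hp => exact absurd rfl hp
  | .onlyK ⟨0, _⟩, _ => exact ⟨(⟨KingPos.both 0 1, by decide⟩ : KingV 3), (⟨KingPos.both 2 0, by decide⟩ : KingV 3), by decide, fct3_K0_b01.trans fct3_K0_b20.symm⟩
  | .onlyK ⟨1, _⟩, _ => exact ⟨(⟨KingPos.both 0 1, by decide⟩ : KingV 3), (⟨KingPos.both 2 1, by decide⟩ : KingV 3), by decide, fct3_K1_b01.trans fct3_K1_b21.symm⟩
  | .onlyK ⟨2, _⟩, _ => exact ⟨(⟨KingPos.both 0 1, by decide⟩ : KingV 3), (⟨KingPos.both 0 2, by decide⟩ : KingV 3), by decide, fct3_K2_b01.trans fct3_K2_b02.symm⟩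
  | .onlyk ⟨0, _⟩, _ => exact ⟨(⟨KingPos.both 0 2, by decide⟩ : KingV 3), (⟨KingPos.both 1 0, by decide⟩ : KingV 3), by decide, fct3_k0_b02.trans fct3_k0_b10.symm⟩
  | .onlyk ⟨1, _⟩, _ => exact ⟨(⟨KingPos.both 0 1, by decide⟩ : KingV 3), (⟨KingPos.both 0 2, by decide⟩ : KingV 3), by decide, fct3_k1_b01.trans fct3_k1_b02.symm⟩
  | .onlyk ⟨2, _⟩, _ => exact ⟨(⟨KingPos.both 0 1, by decide⟩ : KingV 3), (⟨KingPos.both 0 2, by decide⟩ : KingV 3), by decide, fct3_k2_b01.trans fct3_k2_b02.symm⟩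
  | .both ⟨_+3, h⟩ _, _ => omega
  | .both _ ⟨_+3, h⟩, _ => omega
  | .onlyK ⟨_+3, h⟩, _ => omega
  | .onlyk ⟨_+3, h⟩, _ => omega

lemma low3 (S : Finset (KingV 3)) (hS : Resolves (kingR 3) ↑S) : 2 ≤ S.card := by
  by_contra hlt
  push_neg at hlt
  have h01 : S.card = 0 ∨ S.card = 1 := by omega
  rcases h01 with h0 | h1
  · rw [Finset.card_eq_zero] at h0
    subst h0
    have := hS (⟨KingPos.onlyK 0, trivial⟩ : KingV 3) (⟨KingPos.onlyk 2, trivial⟩ : KingV 3) (fun s hs => absurd hs (by simp))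
    exact absurd this (by decide)
  · obtain ⟨s, rfl⟩ := Finset.card_eq_one.mp h1
    obtain ⟨u, v, huv, he⟩ := key3 s
    refine huv (hS u v ?_)
    intro t ht
    have hts : t = s := by simpa using ht
    rw [hts]
    exact he

lemma dim3 : metricDim (kingR 3) = 2 := by
  have hm : 2 ∈ {k : ℕ | ∃ S : Finset (KingV 3), S.card = k ∧ Resolves (kingR 3) ↑S} :=
    ⟨{(⟨KingPos.onlyK 0, trivial⟩ : KingV 3), (⟨KingPos.onlyk 2, trivial⟩ : KingV 3)}, by decide, res3⟩
  refine le_antisymm (Nat.sInf_le hm) (le_csInf ⟨2, hm⟩ ?_)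
  rintro k ⟨S, rfl, hS⟩
  exact low3 S hS

/-- for `n ∈ {2,3}`, the opposing-kings game digraph `G(K(1,n))` has
metric dimension 2 with respect to signed distance. -/
theorem stmt17 (n : ℕ) (hn : n = 2 ∨ n = 3) : metricDim (kingR n) = 2 := by
  rcases hn with rfl | rfl
  · exact dim2
  · exact dim3
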